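/- arXiv:2103.11260 — 6 statements merged into one kernel-verified Lean document; each statement's English description precedes it below -/
import Mathlib

section
/- Let E₁ and E₂ be confocal ellipses with common foci at (0,0) and (2c, 0) for some arrangement placing focus f₁ at the origin, with semi-major axes a₁ ≠ a₂ and eccentricities e₁, e₂ satisfying e₁a₁ = e₂a₂. Let E₁* and E₂* be the polar images of E₁ and E₂ with respect to a circle centered at f₁; these are circles. Then f₁ is a limiting point of the pencil of circles determined by E₁* and E₂*. -/
noncomputable def invAt (ℓ p : ℝ × ℝ) : ℝ × ℝ :=
  (ℓ.1 + (p.1 - ℓ.1) / ((p.1 - ℓ.1) ^ 2 + (p.2 - ℓ.2) ^ 2),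
   ℓ.2 + (p.2 - ℓ.2) / ((p.1 - ℓ.1) ^ 2 + (p.2 - ℓ.2) ^ 2))

def circ (x₀ y₀ s : ℝ) : Set (ℝ × ℝ) :=
  {p | (p.1 - x₀) ^ 2 + (p.2 - y₀) ^ 2 = s ^ 2}

lemma inv_circle_mem (m r x₀ s : ℝ) (hd : m ^ 2 - r ^ 2 ≠ 0)
    (hx : x₀ * (m ^ 2 - r ^ 2) = m)
    (hs : s ^ 2 * (m ^ 2 - r ^ 2) ^ 2 = r ^ 2)
    (p : ℝ × ℝ) (hp : p ∈ circ m 0 r) : invAt (0, 0) p ∈ circ x₀ 0 s := by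
  have hp' : (p.1 - m) ^ 2 + (p.2 - 0) ^ 2 = r ^ 2 := hp
  have hq : p.1 ^ 2 + p.2 ^ 2 ≠ 0 := by
    intro h
    have h1 : p.1 = 0 := by nlinarith [sq_nonneg p.1, sq_nonneg p.2]
    have h2 : p.2 = 0 := by nlinarith [sq_nonneg p.1, sq_nonneg p.2]
    apply hd
    rw [h1, h2] at hp'
    nlinarith
  show ((0:ℝ) + (p.1 - 0) / ((p.1 - 0) ^ 2 + (p.2 - 0) ^ 2) - x₀) ^ 2 +
      ((0:ℝ) + (p.2 - 0) / ((p.1 - 0) ^ 2 + (p.2 - 0) ^ 2) - 0) ^ 2 = s ^ 2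
  have hq' : (p.1 - 0) ^ 2 + (p.2 - 0) ^ 2 ≠ 0 := by simpa using hq
  field_simp
  apply mul_left_cancel₀ (pow_ne_zero 2 hd)
  set q := p.1 ^ 2 + p.2 ^ 2 with hqdef
  linear_combination (q * (m ^ 2 - r ^ 2)) * hp' +
    (2 * q ^ 2 * m + q ^ 2 * (x₀ * (m ^ 2 - r ^ 2) - m) - 2 * (m ^ 2 - r ^ 2) * q * p.1) * hx -
    q ^ 2 * hs

lemma inv_polar_circle (a e ρ : ℝ) (ha : 0 < a) (he : 0 < e) (he' : e < 1) (hρ : 0 < ρ) :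
    ∀ p ∈ circ (ρ ^ 2 * e / (a * (1 - e ^ 2))) 0 (ρ ^ 2 / (a * (1 - e ^ 2))),
      invAt (0, 0) p ∈ circ (-(e * a) / ρ ^ 2) 0 (a / ρ ^ 2) := by
  have h1 : (1 : ℝ) - e ^ 2 > 0 := by nlinarith
  have ha' : a ≠ 0 := ha.ne'
  have hρ' : ρ ≠ 0 := hρ.ne'
  have h1' : (1 : ℝ) - e ^ 2 ≠ 0 := h1.ne'
  intro p hp
  apply inv_circle_mem _ _ _ _ _ _ _ p hp
  · have : (ρ ^ 2 * e / (a * (1 - e ^ 2))) ^ 2 - (ρ ^ 2 / (a * (1 - e ^ 2))) ^ 2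
        = -(ρ ^ 4 / (a ^ 2 * (1 - e ^ 2))) := by
      field_simp
      ring
    rw [this]
    exact neg_ne_zero.mpr (by positivity)
  · field_simp
    ring
  · field_simp
    ring

/-- Let `E₁`, `E₂` be confocal ellipses with common focus `f₁` at the
origin (semi-major axes `a₁ ≠ a₂`, eccentricities `e₁, e₂` with `e₁a₁ = e₂a₂`).
Their polar images with respect to a circle of radius `ρ` centered at `f₁` are the
circles of center `(ρ²eᵢ/(aᵢ(1−eᵢ²)), 0)` and radius `ρ²/(aᵢ(1−eᵢ²))`.  Then `f₁`
(the origin) is a limiting point of the pencil they determine: inversion centered at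
the origin maps both circles to concentric circles. -/
theorem focus_is_limiting_point_of_polar_circles
    (a₁ a₂ e₁ e₂ ρ : ℝ) (ha₁ : 0 < a₁) (ha₂ : 0 < a₂)
    (he₁ : 0 < e₁) (he₁' : e₁ < 1) (he₂ : 0 < e₂) (he₂' : e₂ < 1)
    (hne : a₁ ≠ a₂) (hconf : e₁ * a₁ = e₂ * a₂) (hρ : 0 < ρ) :
    ∃ x₀ y₀ s₁ s₂ : ℝ, 0 < s₁ ∧ 0 < s₂ ∧
      (∀ p ∈ circ (ρ ^ 2 * e₁ / (a₁ * (1 - e₁ ^ 2))) 0 (ρ ^ 2 / (a₁ * (1 - e₁ ^ 2))),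
        invAt (0, 0) p ∈ circ x₀ y₀ s₁) ∧
      (∀ p ∈ circ (ρ ^ 2 * e₂ / (a₂ * (1 - e₂ ^ 2))) 0 (ρ ^ 2 / (a₂ * (1 - e₂ ^ 2))),
        invAt (0, 0) p ∈ circ x₀ y₀ s₂) := by
  refine ⟨-(e₁ * a₁) / ρ ^ 2, 0, a₁ / ρ ^ 2, a₂ / ρ ^ 2, by positivity, by positivity, ?_, ?_⟩
  · exact inv_polar_circle a₁ e₁ ρ ha₁ he₁ he₁' hρ
  · rw [hconf]
    exact inv_polar_circle a₂ e₂ ρ ha₂ he₂ he₂' hρ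
end

section
/- Let P be a point, and let p_{j−1}, p_j, p_{j+1} be three points on a circle of radius R centered at O. Let q_j and q_{j+1} be the orthogonal projections (feet of perpendiculars) of P onto the lines p_{j−1}p_j and p_j p_{j+1} respectively. Then |q_{j+1} − q_j| = |p_{j−1} − p_{j+1}| · |P − p_j| / (2R). -/
/-!
Put the origin at `p₁` and write `u = p₀ - p₁`, `v = p₂ - p₁`, `w = P - p₁`; then `q₁ - p₁` and
`q₂ - p₁` are the projections of `w` onto the lines `ℝ u` and `ℝ v`. In the plane the Gram
determinant of any three vectors vanishes. Applied to `w, u, v` this gives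
`‖q₂ - q₁‖² ‖u‖² ‖v‖² = ‖w‖² (‖u‖² ‖v‖² - ⟪u, v⟫²)`, and applied to `O - p₁, u, v` (using
`‖u‖² = 2 ⟪O - p₁, u⟫` and likewise for `v`) it gives the circumradius formula
`4 R² (‖u‖² ‖v‖² - ⟪u, v⟫²) = ‖u‖² ‖v‖² ‖u - v‖²`. Comparing the two identities proves the claim.
-/

open scoped RealInnerProductSpace

theorem exists_sub_eq_smul_of_mem_line_of_inner_eq_zero {V : Type*} [NormedAddCommGroup V]
    [InnerProductSpace ℝ V] {a b P q : V} (hq : q ∈ line[ℝ, a, b]) (h : ⟪P - q, b - a⟫ = 0) :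
    ∃ t : ℝ, q - a = t • (b - a) ∧ t * ‖b - a‖ ^ 2 = ⟪P - a, b - a⟫ := by
  rw [← vsub_vadd q a, vadd_left_mem_affineSpan_pair] at hq
  obtain ⟨t, ht⟩ := hq
  refine ⟨t, ht.symm, ?_⟩
  rw [show P - a = (P - q) + (q - a) by abel, inner_add_left, h, ← vsub_eq_sub q a, ← ht,
    vsub_eq_sub, real_inner_smul_left, real_inner_self_eq_norm_sq, zero_add]

namespace EuclideanSpace

theorem gram_det_three_eq_zero (u v w : EuclideanSpace ℝ (Fin 2)) :
    ‖u‖ ^ 2 * ‖v‖ ^ 2 * ‖w‖ ^ 2 + 2 * ⟪u, v⟫ * ⟪u, w⟫ * ⟪v, w⟫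
      = ‖u‖ ^ 2 * ⟪v, w⟫ ^ 2 + ‖v‖ ^ 2 * ⟪u, w⟫ ^ 2 + ‖w‖ ^ 2 * ⟪u, v⟫ ^ 2 := by
  simp only [← real_inner_self_eq_norm_sq, PiLp.inner_apply, Fin.sum_univ_two,
    RCLike.inner_apply, conj_trivial]
  ring

theorem norm_sub_sq_mul_of_inner_eq (u v w : EuclideanSpace ℝ (Fin 2)) {s t : ℝ}
    (hs : s * ‖u‖ ^ 2 = ⟪w, u⟫) (ht : t * ‖v‖ ^ 2 = ⟪w, v⟫) :
    ‖t • v - s • u‖ ^ 2 * (‖u‖ ^ 2 * ‖v‖ ^ 2) = ‖w‖ ^ 2 * (‖u‖ ^ 2 * ‖v‖ ^ 2 - ⟪u, v⟫ ^ 2) := by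
  have hchord : ‖t • v - s • u‖ ^ 2 = t ^ 2 * ‖v‖ ^ 2 - 2 * (s * t) * ⟪u, v⟫ + s ^ 2 * ‖u‖ ^ 2 := by
    rw [norm_sub_sq_real, norm_smul, norm_smul, real_inner_smul_left, real_inner_smul_right,
      real_inner_comm, Real.norm_eq_abs, Real.norm_eq_abs, mul_pow, mul_pow, sq_abs, sq_abs]
    ring
  rw [hchord]
  linear_combination (‖u‖ ^ 2 * (t * ‖v‖ ^ 2 + ⟪w, v⟫)) * ht
    + (‖v‖ ^ 2 * (s * ‖u‖ ^ 2 + ⟪w, u⟫)) * hs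
    - 2 * ⟪u, v⟫ * (t * ‖v‖ ^ 2 * hs + ⟪w, u⟫ * ht) - gram_det_three_eq_zero w u v

-- The circumradius formula for the triangle `0, u, v` inscribed in the circle centred at `x`.
theorem four_mul_norm_sq_mul_eq_of_norm_sub_eq (x u v : EuclideanSpace ℝ (Fin 2))
    (hu : ‖u - x‖ = ‖x‖) (hv : ‖v - x‖ = ‖x‖) :
    4 * ‖x‖ ^ 2 * (‖u‖ ^ 2 * ‖v‖ ^ 2 - ⟪u, v⟫ ^ 2) = ‖u‖ ^ 2 * ‖v‖ ^ 2 * ‖u - v‖ ^ 2 := by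
  have hux : ‖u‖ ^ 2 = 2 * ⟪x, u⟫ := by
    have := congrArg (· ^ 2) hu
    rw [norm_sub_sq_real, real_inner_comm] at this
    linarith
  have hvx : ‖v‖ ^ 2 = 2 * ⟪x, v⟫ := by
    have := congrArg (· ^ 2) hv
    rw [norm_sub_sq_real, real_inner_comm] at this
    linarith
  rw [norm_sub_sq_real]
  linear_combination 4 * gram_det_three_eq_zero x u v
    - ‖u‖ ^ 2 * (2 * ⟪x, v⟫ + ‖v‖ ^ 2) * hvx - ‖v‖ ^ 2 * (2 * ⟪x, u⟫ + ‖u‖ ^ 2) * hux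
    + 2 * ⟪u, v⟫ * (‖u‖ ^ 2 * hvx + 2 * ⟪x, v⟫ * hux)

theorem norm_sub_mul_two_mul_norm_eq {x u v w : EuclideanSpace ℝ (Fin 2)} {s t : ℝ}
    (hu₀ : u ≠ 0) (hv₀ : v ≠ 0) (hu : ‖u - x‖ = ‖x‖) (hv : ‖v - x‖ = ‖x‖)
    (hs : s * ‖u‖ ^ 2 = ⟪w, u⟫) (ht : t * ‖v‖ ^ 2 = ⟪w, v⟫) :
    ‖t • v - s • u‖ * (2 * ‖x‖) = ‖u - v‖ * ‖w‖ := by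
  have hUV : ‖u‖ ^ 2 * ‖v‖ ^ 2 ≠ 0 := by positivity
  have hsq : (‖t • v - s • u‖ * (2 * ‖x‖)) ^ 2 * (‖u‖ ^ 2 * ‖v‖ ^ 2)
      = (‖u - v‖ * ‖w‖) ^ 2 * (‖u‖ ^ 2 * ‖v‖ ^ 2) := by
    linear_combination 4 * ‖x‖ ^ 2 * norm_sub_sq_mul_of_inner_eq u v w hs ht
      + ‖w‖ ^ 2 * four_mul_norm_sq_mul_eq_of_norm_sub_eq x u v hu hv
  exact (pow_left_inj₀ (by positivity) (by positivity) two_ne_zero).1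
    (mul_right_cancel₀ hUV hsq)

end EuclideanSpace

theorem pedal_sidelength_general
    (O P p₀ p₁ p₂ q₁ q₂ : EuclideanSpace ℝ (Fin 2)) (R : ℝ) (hR : 0 < R)
    (h₀ : dist O p₀ = R) (h₁ : dist O p₁ = R) (h₂ : dist O p₂ = R)
    (h01 : p₀ ≠ p₁) (h12 : p₁ ≠ p₂)
    (hq₁mem : q₁ ∈ affineSpan ℝ ({p₀, p₁} : Set (EuclideanSpace ℝ (Fin 2))))
    (hq₁perp : (inner ℝ (P - q₁) (p₁ - p₀) : ℝ) = 0)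
    (hq₂mem : q₂ ∈ affineSpan ℝ ({p₁, p₂} : Set (EuclideanSpace ℝ (Fin 2))))
    (hq₂perp : (inner ℝ (P - q₂) (p₂ - p₁) : ℝ) = 0) :
    dist q₂ q₁ = dist p₀ p₂ * dist P p₁ / (2 * R) := by
  obtain ⟨s, hq₁, hs⟩ := exists_sub_eq_smul_of_mem_line_of_inner_eq_zero (P := P)
    (Set.pair_comm p₀ p₁ ▸ hq₁mem) (by rw [← neg_sub p₁ p₀, inner_neg_right, hq₁perp, neg_zero])
  obtain ⟨t, hq₂, ht⟩ := exists_sub_eq_smul_of_mem_line_of_inner_eq_zero hq₂mem hq₂perp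
  have hchord : q₂ - q₁ = t • (p₂ - p₁) - s • (p₀ - p₁) := by
    rw [← hq₁, ← hq₂, sub_sub_sub_cancel_right]
  have hcirc : ∀ p, dist O p = R → ‖(p - p₁) - (O - p₁)‖ = ‖O - p₁‖ := fun p hp => by
    rw [sub_sub_sub_cancel_right, ← dist_eq_norm, ← dist_eq_norm, dist_comm, hp, h₁]
  have key := EuclideanSpace.norm_sub_mul_two_mul_norm_eq (sub_ne_zero.2 h01)
    (sub_ne_zero.2 h12.symm) (hcirc p₀ h₀) (hcirc p₂ h₂) hs ht
  rw [← hchord, sub_sub_sub_cancel_right, ← dist_eq_norm O p₁, h₁] at key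
  simp only [← dist_eq_norm] at key
  rwa [eq_div_iff (by positivity)]

/-- Pedal sidelength formula.  Let `P` be a point and `p₀, p₁, p₂` be
pairwise distinct points on a circle of radius `R` centered at `O`.  If `q₁` is the
foot of the perpendicular from `P` to line `p₀p₁` and `q₂` the foot of the
perpendicular from `P` to line `p₁p₂`, then
`dist q₂ q₁ = dist p₀ p₂ * dist P p₁ / (2R)`. -/
theorem pedal_sidelength
    (O P p₀ p₁ p₂ q₁ q₂ : EuclideanSpace ℝ (Fin 2)) (R : ℝ) (hR : 0 < R)
    (h₀ : dist O p₀ = R) (h₁ : dist O p₁ = R) (h₂ : dist O p₂ = R)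
    (h01 : p₀ ≠ p₁) (h12 : p₁ ≠ p₂) (h02 : p₀ ≠ p₂)
    (hq₁mem : q₁ ∈ affineSpan ℝ ({p₀, p₁} : Set (EuclideanSpace ℝ (Fin 2))))
    (hq₁perp : (inner ℝ (P - q₁) (p₁ - p₀) : ℝ) = 0)
    (hq₂mem : q₂ ∈ affineSpan ℝ ({p₁, p₂} : Set (EuclideanSpace ℝ (Fin 2))))
    (hq₂perp : (inner ℝ (P - q₂) (p₂ - p₁) : ℝ) = 0) :
    dist q₂ q₁ = dist p₀ p₂ * dist P p₁ / (2 * R) :=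
  pedal_sidelength_general O P p₀ p₁ p₂ q₁ q₂ R hR h₀ h₁ h₂ h01 h12 hq₁mem hq₁perp hq₂mem hq₂perp
end

section
/- Let r > 0, d > 0, R > d + r define nested circles C_R of radius R centered at the origin and C_r of radius r centered at (−d,0), and let δ denote a limiting point abscissa δ = (r² − R² − d² ± √(d⁴ − 2(R²+r²)d² + (R²−r²)²))/(2d) with the discriminant nonnegative. Set k² = 4Rd/((R+d)² − r²) with 0 < k < 1. For a point p = R(cos 2φ, sin 2φ) on C_R, the distance ρ from (δ, 0) to p satisfies ρ = (2/k)√(−δR)·√(1 − k² sin² φ). In particular δ < 0. -/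
/-- For nested circles `C_R` (radius `R`, center origin) and `C_r`
(radius `r`, center `(−d, 0)`), with limiting-point abscissa
`δ = (r² − R² − d² ± √(d⁴ − 2(R²+r²)d² + (R²−r²)²))/(2d)` and Jacobi modulus
`k² = 4Rd/((R+d)² − r²)`, `0 < k < 1`, the distance `ρ` from `(δ, 0)` to the point
`p = R(cos 2φ, sin 2φ)` of `C_R` satisfies
`ρ = (2/k)√(−δR)·√(1 − k² sin² φ)`; in particular `δ < 0`. -/
theorem limiting_point_spoke_length
    (r d R : ℝ) (hr : 0 < r) (hd : 0 < d) (hnest : d + r < R)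
    (δ : ℝ)
    (hδ : δ = (r ^ 2 - R ^ 2 - d ^ 2 +
        Real.sqrt (d ^ 4 - 2 * (R ^ 2 + r ^ 2) * d ^ 2 + (R ^ 2 - r ^ 2) ^ 2)) / (2 * d) ∨
      δ = (r ^ 2 - R ^ 2 - d ^ 2 -
        Real.sqrt (d ^ 4 - 2 * (R ^ 2 + r ^ 2) * d ^ 2 + (R ^ 2 - r ^ 2) ^ 2)) / (2 * d))
    (k : ℝ) (hk0 : 0 < k) (hk1 : k < 1)
    (hk : k ^ 2 = 4 * R * d / ((R + d) ^ 2 - r ^ 2)) (φ : ℝ) :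
    δ < 0 ∧
    Real.sqrt ((R * Real.cos (2 * φ) - δ) ^ 2 + (R * Real.sin (2 * φ)) ^ 2) =
      (2 / k) * Real.sqrt (-δ * R) * Real.sqrt (1 - k ^ 2 * Real.sin φ ^ 2) := by
  have ha : 0 < (R + r) ^ 2 - d ^ 2 := by nlinarith
  have hb : 0 < (R - r) ^ 2 - d ^ 2 := by nlinarith
  have hD : (0:ℝ) ≤ d ^ 4 - 2 * (R ^ 2 + r ^ 2) * d ^ 2 + (R ^ 2 - r ^ 2) ^ 2 := by
    nlinarith [mul_pos ha hb]
  have hs : Real.sqrt (d ^ 4 - 2 * (R ^ 2 + r ^ 2) * d ^ 2 + (R ^ 2 - r ^ 2) ^ 2) ^ 2 =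
      d ^ 4 - 2 * (R ^ 2 + r ^ 2) * d ^ 2 + (R ^ 2 - r ^ 2) ^ 2 := Real.sq_sqrt hD
  have hdne : (2 : ℝ) * d ≠ 0 := by positivity
  have h4ne : (4 : ℝ) * d ≠ 0 := by positivity
  -- the quadratic equation satisfied by δ
  have hquad : d * δ ^ 2 + (R ^ 2 + d ^ 2 - r ^ 2) * δ + d * R ^ 2 = 0 := by
    set s := Real.sqrt (d ^ 4 - 2 * (R ^ 2 + r ^ 2) * d ^ 2 + (R ^ 2 - r ^ 2) ^ 2) with hsdef
    have hq4 : 4 * d * (d * δ ^ 2 + (R ^ 2 + d ^ 2 - r ^ 2) * δ + d * R ^ 2) = 4 * d * 0 := by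
      rcases hδ with h | h
      · have h2 : 2 * d * δ = r ^ 2 - R ^ 2 - d ^ 2 + s := by
          rw [h]; field_simp
        linear_combination (2 * d * δ - (r ^ 2 - R ^ 2 - d ^ 2) + s) * h2 + hs
      · have h2 : 2 * d * δ = r ^ 2 - R ^ 2 - d ^ 2 - s := by
          rw [h]; field_simp
        linear_combination (2 * d * δ - (r ^ 2 - R ^ 2 - d ^ 2) - s) * h2 + hs
    exact mul_left_cancel₀ h4ne hq4
  have hA : 0 < R ^ 2 + d ^ 2 - r ^ 2 := by nlinarith
  have hδneg : δ < 0 := by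
    by_contra h
    push_neg at h
    nlinarith [mul_nonneg hA.le h, mul_nonneg (mul_nonneg hd.le h) h, mul_pos hd (mul_pos (lt_trans (by linarith) hnest : (0:ℝ) < R) (lt_trans (by linarith) hnest))]
  refine ⟨hδneg, ?_⟩
  have hden : 0 < (R + d) ^ 2 - r ^ 2 := by nlinarith
  have hkd : k ^ 2 * ((R + d) ^ 2 - r ^ 2) = 4 * R * d := by
    rw [hk]; field_simp
  have hk2 : -δ * ((R + d) ^ 2 - r ^ 2) = d * (R - δ) ^ 2 := by linear_combination -hquad
  have hmain : k ^ 2 * (R - δ) ^ 2 = 4 * (-δ) * R := by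
    have hm : d * (k ^ 2 * (R - δ) ^ 2) = d * (4 * (-δ) * R) := by
      linear_combination (-k ^ 2) * hk2 + (-δ) * hkd
    exact mul_left_cancel₀ hd.ne' hm
  have hkne : k ≠ 0 := ne_of_gt hk0
  have hRpos : (0:ℝ) < R := by linarith
  have hδR : (0:ℝ) ≤ -δ * R := by nlinarith
  have hks : 0 ≤ 1 - k ^ 2 * Real.sin φ ^ 2 := by
    nlinarith [Real.sin_sq_le_one φ, sq_nonneg (Real.sin φ)]
  have hrhs : (0:ℝ) ≤ (2 / k) * Real.sqrt (-δ * R) * Real.sqrt (1 - k ^ 2 * Real.sin φ ^ 2) := by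
    positivity
  have hcos : Real.cos (2 * φ) = 1 - 2 * Real.sin φ ^ 2 := by
    rw [Real.cos_two_mul]
    linear_combination 2 * Real.sin_sq_add_cos_sq φ
  have hsin2 : Real.sin (2 * φ) ^ 2 = 1 - Real.cos (2 * φ) ^ 2 := by
    linear_combination Real.sin_sq_add_cos_sq (2 * φ)
  have e1 : Real.sqrt (-δ * R) ^ 2 = -δ * R := Real.sq_sqrt hδR
  have e2 : Real.sqrt (1 - k ^ 2 * Real.sin φ ^ 2) ^ 2 = 1 - k ^ 2 * Real.sin φ ^ 2 :=
    Real.sq_sqrt hks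
  have step1 : (R * Real.cos (2 * φ) - δ) ^ 2 + (R * Real.sin (2 * φ)) ^ 2 =
      (R - δ) ^ 2 + 4 * R * δ * Real.sin φ ^ 2 := by
    linear_combination R ^ 2 * hsin2 + (-2 * R * δ) * hcos
  have step2 : (R - δ) ^ 2 + 4 * R * δ * Real.sin φ ^ 2 =
      ((2 / k) * Real.sqrt (-δ * R) * Real.sqrt (1 - k ^ 2 * Real.sin φ ^ 2)) ^ 2 := by
    have expand : ((2 / k) * Real.sqrt (-δ * R) * Real.sqrt (1 - k ^ 2 * Real.sin φ ^ 2)) ^ 2 =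
        (2 / k) ^ 2 * (Real.sqrt (-δ * R) ^ 2) * (Real.sqrt (1 - k ^ 2 * Real.sin φ ^ 2) ^ 2) := by
      ring
    have h24 : (2 / k) ^ 2 = 4 / k ^ 2 := by rw [div_pow]; norm_num
    have h25 : 4 / k ^ 2 * (-δ * R) = (R - δ) ^ 2 := by
      rw [div_mul_eq_mul_div, div_eq_iff (pow_ne_zero 2 hkne)]
      linear_combination -hmain
    rw [expand, e1, e2, h24, h25]
    linear_combination Real.sin φ ^ 2 * hmain
  rw [step1, step2, Real.sqrt_sq hrhs]
end

section
/- With the setup of two confocal origin-centered ellipses with semi-axes (a, b) and (a′, b′), c² = a² − b² = a′² − b′², and their polar-image circles with respect to a radius-ρ circle centered at f₁ = (−c, 0) (centers (−c − ρ²c/b², 0), (−c − ρ²c/b′², 0), radii ρ²a/b², ρ²a′/b′²), the limiting points of the pencil generated by these two circles are (−c, 0) and (−c + ρ²/c, 0). -/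
/-! Inversion at `ℓ` sends a circle of center `O` and radius `r` to the circle of center
`ℓ + (O - ℓ)/k` and radius `r/k`, where `k` is the power of `ℓ`. For the polar image of an
ellipse with semi-axes `(a, b)` and `a² - b² = c²`, both at `ℓ = (-c, 0)` and at
`ℓ = (-c + ρ²/c, 0)` (the inverse of the common centre) the quotient `(O - ℓ)/k` works out
to `± c/ρ²`, independent of the ellipse, so the images of all polar circles of a confocal
family are concentric. -/

def powerAt (ℓ : ℝ × ℝ) (x₀ y₀ r : ℝ) : ℝ :=
  (x₀ - ℓ.1) ^ 2 + (y₀ - ℓ.2) ^ 2 - r ^ 2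

theorem invAt_mem_circ {ℓ p : ℝ × ℝ} {x₀ y₀ r : ℝ} (hk : powerAt ℓ x₀ y₀ r ≠ 0)
    (hp : p ∈ circ x₀ y₀ r) :
    invAt ℓ p ∈ circ (ℓ.1 + (x₀ - ℓ.1) / powerAt ℓ x₀ y₀ r)
      (ℓ.2 + (y₀ - ℓ.2) / powerAt ℓ x₀ y₀ r) (r / powerAt ℓ x₀ y₀ r) := by
  simp only [invAt, circ, powerAt, Set.mem_ofPred_eq] at hp hk ⊢
  replace hp : (p.1 - ℓ.1 - (x₀ - ℓ.1)) ^ 2 + (p.2 - ℓ.2 - (y₀ - ℓ.2)) ^ 2 = r ^ 2 := by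
    rw [← hp]; ring
  generalize p.1 - ℓ.1 = u, p.2 - ℓ.2 = v, x₀ - ℓ.1 = M, y₀ - ℓ.2 = N at hp hk ⊢
  generalize hk_def : M ^ 2 + N ^ 2 - r ^ 2 = k at hk ⊢
  have hD : u ^ 2 + v ^ 2 = 2 * (u * M + v * N) - k := by
    rw [← hk_def]; linear_combination hp
  have hD0 : u ^ 2 + v ^ 2 ≠ 0 := by
    intro h0
    have hu : u = 0 := by nlinarith [sq_nonneg u, sq_nonneg v]
    have hv : v = 0 := by nlinarith [sq_nonneg u, sq_nonneg v]
    apply hk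
    rw [hu, hv] at hD
    linarith
  field_simp
  linear_combination (u ^ 2 + v ^ 2) ^ 2 * hk_def + k * (u ^ 2 + v ^ 2) * hD

theorem circ_neg (x₀ y₀ s : ℝ) : circ x₀ y₀ (-s) = circ x₀ y₀ s := by
  simp only [circ, neg_sq]

/-- The polar image, with respect to the circle of radius `ρ` centred at the focus `(-c, 0)`,
of the origin-centred ellipse with semi-axes `(a, b)`. -/
def polarCircle (a b c ρ : ℝ) : Set (ℝ × ℝ) :=
  circ (-c - ρ ^ 2 * c / b ^ 2) 0 (ρ ^ 2 * a / b ^ 2)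

section PolarCircle

variable {a b c ρ : ℝ}

theorem powerAt_focus_polarCircle (hb : b ≠ 0) (hc2 : a ^ 2 - b ^ 2 = c ^ 2) :
    powerAt (-c, 0) (-c - ρ ^ 2 * c / b ^ 2) 0 (ρ ^ 2 * a / b ^ 2) = -(ρ ^ 4 / b ^ 2) := by
  simp only [powerAt]
  field_simp
  linear_combination (-(ρ ^ 4)) * hc2

theorem invAt_focus_mem_circ (hb : b ≠ 0) (hρ : ρ ≠ 0) (hc2 : a ^ 2 - b ^ 2 = c ^ 2)
    {p : ℝ × ℝ} (hp : p ∈ polarCircle a b c ρ) :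
    invAt (-c, 0) p ∈ circ (-c + c / ρ ^ 2) 0 (a / ρ ^ 2) := by
  have hk := powerAt_focus_polarCircle (ρ := ρ) hb hc2
  have h := invAt_mem_circ (by rw [hk]; exact neg_ne_zero.mpr (by positivity)) hp
  rw [hk, ← circ_neg] at h
  convert h using 2
  · field_simp
    ring
  · simp
  · field_simp

theorem powerAt_inverseCenter_polarCircle (hb : b ≠ 0) (hc : c ≠ 0) (hc2 : a ^ 2 - b ^ 2 = c ^ 2) :
    powerAt (-c + ρ ^ 2 / c, 0) (-c - ρ ^ 2 * c / b ^ 2) 0 (ρ ^ 2 * a / b ^ 2) =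
      ρ ^ 4 * a ^ 2 / (b ^ 2 * c ^ 2) := by
  simp only [powerAt]
  field_simp
  linear_combination (-(ρ ^ 4 * (b ^ 2 + c ^ 2))) * hc2

theorem invAt_inverseCenter_mem_circ (ha : a ≠ 0) (hb : b ≠ 0) (hc : c ≠ 0) (hρ : ρ ≠ 0)
    (hc2 : a ^ 2 - b ^ 2 = c ^ 2) {p : ℝ × ℝ} (hp : p ∈ polarCircle a b c ρ) :
    invAt (-c + ρ ^ 2 / c, 0) p ∈ circ (-c + ρ ^ 2 / c - c / ρ ^ 2) 0 (c ^ 2 / (ρ ^ 2 * a)) := by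
  have hk := powerAt_inverseCenter_polarCircle (ρ := ρ) hb hc hc2
  have h := invAt_mem_circ (by rw [hk]; positivity) hp
  rw [hk] at h
  convert h using 2
  · field_simp
    linear_combination (-(ρ ^ 2 * c ^ 2)) * hc2
  · simp
  · field_simp

end PolarCircle

theorem limiting_points_of_polar_image_circles_general
    (a b a' b' c ρ : ℝ)
    (hab : 0 < b ∧ b < a) (hab' : 0 < b' ∧ b' < a')
    (hc : 0 < c) (hc2 : a ^ 2 - b ^ 2 = c ^ 2) (hc2' : a' ^ 2 - b' ^ 2 = c ^ 2)
    (hρ : 0 < ρ)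
    (ℓ : ℝ × ℝ) (hℓ : ℓ = (-c, 0) ∨ ℓ = (-c + ρ ^ 2 / c, 0)) :
    ∃ x₀ y₀ s₁ s₂ : ℝ, 0 < s₁ ∧ 0 < s₂ ∧
      (∀ p ∈ circ (-c - ρ ^ 2 * c / b ^ 2) 0 (ρ ^ 2 * a / b ^ 2),
        invAt ℓ p ∈ circ x₀ y₀ s₁) ∧
      (∀ p ∈ circ (-c - ρ ^ 2 * c / b' ^ 2) 0 (ρ ^ 2 * a' / b' ^ 2),
        invAt ℓ p ∈ circ x₀ y₀ s₂) := by
  obtain ⟨hb, hba⟩ := hab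
  obtain ⟨hb', hba'⟩ := hab'
  have ha : 0 < a := hb.trans hba
  have ha' : 0 < a' := hb'.trans hba'
  rcases hℓ with rfl | rfl
  · exact ⟨-c + c / ρ ^ 2, 0, a / ρ ^ 2, a' / ρ ^ 2, by positivity, by positivity,
      fun _ ↦ invAt_focus_mem_circ hb.ne' hρ.ne' hc2,
      fun _ ↦ invAt_focus_mem_circ hb'.ne' hρ.ne' hc2'⟩
  · exact ⟨-c + ρ ^ 2 / c - c / ρ ^ 2, 0, c ^ 2 / (ρ ^ 2 * a), c ^ 2 / (ρ ^ 2 * a'),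
      by positivity, by positivity,
      fun _ ↦ invAt_inverseCenter_mem_circ ha.ne' hb.ne' hc.ne' hρ.ne' hc2,
      fun _ ↦ invAt_inverseCenter_mem_circ ha'.ne' hb'.ne' hc.ne' hρ.ne' hc2'⟩

/-- For two origin-centered confocal ellipses with semi-axes `(a, b)`
and `(a′, b′)`, `c² = a² − b² = a′² − b′²`, the polar-image circles with respect to a
radius-`ρ` circle centered at `f₁ = (−c, 0)` have centers `(−c − ρ²c/b², 0)`,
`(−c − ρ²c/b′², 0)` and radii `ρ²a/b²`, `ρ²a′/b′²`; the limiting points of the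
pencil generated by these two circles are `(−c, 0)` and `(−c + ρ²/c, 0)`: inversion
centered at either point maps both circles to concentric circles. -/
theorem limiting_points_of_polar_image_circles
    (a b a' b' c ρ : ℝ)
    (hab : 0 < b ∧ b < a) (hab' : 0 < b' ∧ b' < a') (ha' : a' < a)
    (hc : 0 < c) (hc2 : a ^ 2 - b ^ 2 = c ^ 2) (hc2' : a' ^ 2 - b' ^ 2 = c ^ 2)
    (hρ : 0 < ρ)
    (ℓ : ℝ × ℝ) (hℓ : ℓ = (-c, 0) ∨ ℓ = (-c + ρ ^ 2 / c, 0)) :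
    ∃ x₀ y₀ s₁ s₂ : ℝ, 0 < s₁ ∧ 0 < s₂ ∧
      (∀ p ∈ circ (-c - ρ ^ 2 * c / b ^ 2) 0 (ρ ^ 2 * a / b ^ 2),
        invAt ℓ p ∈ circ x₀ y₀ s₁) ∧
      (∀ p ∈ circ (-c - ρ ^ 2 * c / b' ^ 2) 0 (ρ ^ 2 * a' / b' ^ 2),
        invAt ℓ p ∈ circ x₀ y₀ s₂) :=
  limiting_points_of_polar_image_circles_general a b a' b' c ρ hab hab' hc hc2 hc2' hρ ℓ hℓ
end

section
/- Let C_int: x² + y² = r² and C_ext: (x+d)² + y² = R² be nested circles (0 < r, 0 < d, d + r < R), with Δ = √((d+R+r)(R−d+r)(R+d−r)(R−d−r)) and internal limiting point ℓ₁ = ((R² − d² − r² − Δ)/(2d), 0). The polar image of C_int with respect to a circle of radius ρ centered at ℓ₁ is the ellipse centered at (ρ²d/Δ + (k−Δ)/(2d), 0), where k = R² − d² − r², with semi-axes a, b satisfying a² = ρ⁴(2d²r² + Δ(k+Δ))/(2Δ²r²) and b² = ρ⁴(k+Δ)/(2Δr²), and in particular a² − b² = ρ⁴d²/Δ². -/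
/-- `q` is the pole, with respect to the circle of radius `ρ` centered at `f`, of the
line `L`: every point of `L` satisfies `⟪p − f, q − f⟫ = ρ²`. -/
def IsPoleOf (f : ℝ × ℝ) (ρ : ℝ) (q : ℝ × ℝ) (L : Set (ℝ × ℝ)) : Prop :=
  ∀ p ∈ L, (p.1 - f.1) * (q.1 - f.1) + (p.2 - f.2) * (q.2 - f.2) = ρ ^ 2

set_option maxHeartbeats 2000000 in
/-- Let `C_int : x² + y² = r²` and `C_ext : (x+d)² + y² = R²` be nested
circles (`0 < r`, `0 < d`, `d + r < R`), with
`Δ = √((d+R+r)(R−d+r)(R+d−r)(R−d−r))`, `κ = R² − d² − r²`, and internal limiting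
point `ℓ₁ = ((κ − Δ)/(2d), 0)`.  The polar image of `C_int` with respect to the
circle of radius `ρ` centered at `ℓ₁` (the locus of poles of the tangent lines of
`C_int`, the tangent line at `(r cos t, r sin t)` being `{p | p·(cos t, sin t) = r}`)
is the ellipse centered at `(ρ²d/Δ + (κ−Δ)/(2d), 0)` with semi-axes
`a² = ρ⁴(2d²r² + Δ(κ+Δ))/(2Δ²r²)`, `b² = ρ⁴(κ+Δ)/(2Δr²)`; moreover
`a² − b² = ρ⁴d²/Δ²`. -/
theorem polar_image_of_inner_circle_is_ellipse
    (r d R ρ : ℝ) (hr : 0 < r) (hd : 0 < d) (hnest : d + r < R) (hρ : 0 < ρ)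
    (Δ κ : ℝ)
    (hΔ : Δ = Real.sqrt ((d + R + r) * (R - d + r) * (R + d - r) * (R - d - r)))
    (hκ : κ = R ^ 2 - d ^ 2 - r ^ 2)
    (ℓ₁ : ℝ × ℝ) (hℓ₁ : ℓ₁ = ((κ - Δ) / (2 * d), 0))
    (a2 b2 : ℝ)
    (ha2 : a2 = ρ ^ 4 * (2 * d ^ 2 * r ^ 2 + Δ * (κ + Δ)) / (2 * Δ ^ 2 * r ^ 2))
    (hb2 : b2 = ρ ^ 4 * (κ + Δ) / (2 * Δ * r ^ 2)) :
    (∀ t : ℝ, ∀ q : ℝ × ℝ,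
      IsPoleOf ℓ₁ ρ q {p | p.1 * Real.cos t + p.2 * Real.sin t = r} →
      (q.1 - (ρ ^ 2 * d / Δ + (κ - Δ) / (2 * d))) ^ 2 / a2 + q.2 ^ 2 / b2 = 1) ∧
    a2 - b2 = ρ ^ 4 * d ^ 2 / Δ ^ 2 := by
  have h1 : 0 < d + R + r := by linarith
  have h2 : 0 < R - d + r := by linarith
  have h3 : 0 < R + d - r := by linarith
  have h4 : 0 < R - d - r := by linarith
  have hΔpos : 0 < Δ := by
    rw [hΔ]; positivity
  have hΔ2 : Δ ^ 2 = κ ^ 2 - 4 * d ^ 2 * r ^ 2 := by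
    rw [hΔ, Real.sq_sqrt (by positivity), hκ]; ring
  have hκ2dr : 2 * d * r < κ := by nlinarith
  have hSpos : 0 < κ + Δ := by nlinarith
  set e := (κ - Δ) / (2 * d) with he_def
  have hde : 2 * d * e = κ - Δ := by rw [he_def]; field_simp
  have he4 : d * e ^ 2 + e * Δ = d * r ^ 2 := by
    have he4' : d * (d * e ^ 2 + e * Δ - d * r ^ 2) = 0 := by
      linear_combination ((2 * d * e + Δ + κ) / 4) * hde - (1 / 4) * hΔ2
    rcases mul_eq_zero.mp he4' with h | h
    · exact absurd h hd.ne'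
    · linarith
  have heS : e * (κ + Δ) = 2 * d * r ^ 2 := by
    linear_combination (-e) * hde + 2 * he4
  have heval : e = 2 * d * r ^ 2 / (κ + Δ) := by
    rw [eq_div_iff hSpos.ne']; linear_combination heS
  have hepos : 0 < e := by rw [heval]; positivity
  have helt : e < r := by
    rw [heval, div_lt_iff₀ hSpos]; nlinarith
  have hnum : 0 < 2 * d ^ 2 * r ^ 2 + Δ * (κ + Δ) := by
    nlinarith [mul_pos hΔpos hSpos]
  have ha2pos : 0 < a2 := by
    rw [ha2]
    exact div_pos (mul_pos (pow_pos hρ 4) hnum) (by positivity)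
  have hb2pos : 0 < b2 := by
    rw [hb2]
    exact div_pos (mul_pos (pow_pos hρ 4) hSpos) (by positivity)
  have ha2m : a2 * (2 * Δ ^ 2 * r ^ 2) = ρ ^ 4 * (2 * d ^ 2 * r ^ 2 + Δ * (κ + Δ)) := by
    rw [ha2]; field_simp
  have hb2m : b2 * (2 * Δ * r ^ 2) = ρ ^ 4 * (κ + Δ) := by
    rw [hb2]; field_simp
  constructor
  · intro t q h
    set c := Real.cos t with hc
    set s := Real.sin t with hs
    have hcs : c ^ 2 + s ^ 2 = 1 := by rw [hc, hs]; exact Real.cos_sq_add_sin_sq t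
    have hc1 : c ≤ 1 := by rw [hc]; exact Real.cos_le_one t
    have hDpos : 0 < r - e * c := by nlinarith [mul_nonneg hepos.le (by linarith : (0:ℝ) ≤ 1 - c)]
    have E1 := h (r * c, r * s) (by
      simp only [Set.mem_setOf_eq]
      linear_combination r * hcs)
    have E2 := h (r * c - s, r * s + c) (by
      simp only [Set.mem_setOf_eq]
      linear_combination r * hcs)
    rw [hℓ₁] at E1 E2
    simp only at E1 E2
    have hu : (q.1 - e) * (r - e * c) = c * ρ ^ 2 := by
      linear_combination c * E1 + r * s * E1 - r * s * E2 - r * (q.1 - e) * hcs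
    have hv : q.2 * (r - e * c) = s * ρ ^ 2 := by
      linear_combination s * E1 + (r * c - e) * E2 - (r * c - e) * E1 - r * q.2 * hcs
    have hXA : (q.1 - (ρ ^ 2 * d / Δ + e)) * Δ = q.1 * Δ - ρ ^ 2 * d - e * Δ := by
      field_simp; ring
    have hT : (q.1 * Δ - ρ ^ 2 * d - e * Δ) ^ 2 * b2 + a2 * q.2 ^ 2 * Δ ^ 2 = a2 * b2 * Δ ^ 2 := by
      have hbig : (4 * d ^ 5 * r ^ 4 * Δ ^ 3 * (r - e * c) ^ 4) *
          ((q.1 * Δ - ρ ^ 2 * d - e * Δ) ^ 2 * b2 + a2 * q.2 ^ 2 * Δ ^ 2 - a2 * b2 * Δ ^ 2) = 0 := by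
        linear_combination (-2*b2*d^5*r^6*Δ^3 + 8*b2*c*d^5*r^5*Δ^3*e + -12*b2*c^2*d^5*r^4*Δ^3*e^2 + 8*b2*c^3*d^5*r^3*Δ^3*e^3 + -2*b2*c^4*d^5*r^2*Δ^3*e^4 + 2*q.2^2*d^5*r^6*Δ^3 + -8*q.2^2*c*d^5*r^5*Δ^3*e + 12*q.2^2*c^2*d^5*r^4*Δ^3*e^2 + -8*q.2^2*c^3*d^5*r^3*Δ^3*e^3 + 2*q.2^2*c^4*d^5*r^2*Δ^3*e^4) * ha2m +
  (-1*d^5*r^4*ρ^4*Δ^4 + 2*d^5*r^6*Δ^4*e^2 + 4*d^6*r^6*ρ^2*Δ^3*e + 4*c*d^5*r^3*ρ^4*Δ^4*e + -8*c*d^5*r^5*Δ^4*e^3 + -16*c*d^6*r^5*ρ^2*Δ^3*e^2 + -6*c^2*d^5*r^2*ρ^4*Δ^4*e^2 + 12*c^2*d^5*r^4*Δ^4*e^4 + 24*c^2*d^6*r^4*ρ^2*Δ^3*e^3 + 4*c^3*d^5*r*ρ^4*Δ^4*e^3 + -8*c^3*d^5*r^3*Δ^4*e^5 + -16*c^3*d^6*r^3*ρ^2*Δ^3*e^4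 + -1*c^4*d^5*ρ^4*Δ^4*e^4 + 2*c^4*d^5*r^2*Δ^4*e^6 + 4*c^4*d^6*r^2*ρ^2*Δ^3*e^5 + -1*κ*d^5*r^4*ρ^4*Δ^3 + 4*κ*c*d^5*r^3*ρ^4*Δ^3*e + -6*κ*c^2*d^5*r^2*ρ^4*Δ^3*e^2 + 4*κ*c^3*d^5*r*ρ^4*Δ^3*e^3 + -1*κ*c^4*d^5*ρ^4*Δ^3*e^4 + -4*q.1*d^5*r^6*Δ^4*e + -4*q.1*d^6*r^6*ρ^2*Δ^3 + 16*q.1*c*d^5*r^5*Δ^4*e^2 + 16*q.1*c*d^6*r^5*ρ^2*Δ^3*e + -24*q.1*c^2*d^5*r^4*Δ^4*e^3 + -24*q.1*c^2*d^6*r^4*ρ^2*Δ^3*e^2 + 16*q.1*c^3*d^5*r^3*Δ^4*e^4 + 16*q.1*c^3*d^6*r^3*ρ^2*Δ^3*e^3 + -4*q.1*c^4*d^5*r^2*Δ^4*e^5 + -4*q.1*c^4*d^6*r^2*ρ^2*Δ^3*e^4 + 2*q.1^2*d^5*r^6*Δ^4 + -8*q.1^2*c*d^5*r^5*Δ^4*e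 + 12*q.1^2*c^2*d^5*r^4*Δ^4*e^2 + -8*q.1^2*c^3*d^5*r^3*Δ^4*e^3 + 2*q.1^2*c^4*d^5*r^2*Δ^4*e^4) * hb2m +
  (3*d^5*r^4*ρ^8*Δ^4 + -2*d^5*r^6*ρ^4*Δ^4*e^2 + 2*d^6*r^4*ρ^8*Δ^3*e + -4*d^6*r^6*ρ^6*Δ^3*e + -12*c*d^5*r^3*ρ^8*Δ^4*e + 8*c*d^5*r^5*ρ^4*Δ^4*e^3 + -8*c*d^6*r^3*ρ^8*Δ^3*e^2 + 16*c*d^6*r^5*ρ^6*Δ^3*e^2 + 18*c^2*d^5*r^2*ρ^8*Δ^4*e^2 + -12*c^2*d^5*r^4*ρ^4*Δ^4*e^4 + 12*c^2*d^6*r^2*ρ^8*Δ^3*e^3 + -24*c^2*d^6*r^4*ρ^6*Δ^3*e^3 + -12*c^3*d^5*r*ρ^8*Δ^4*e^3 + 8*c^3*d^5*r^3*ρ^4*Δ^4*e^5 + -8*c^3*d^6*r*ρ^8*Δ^3*e^4 + 16*c^3*d^6*r^3*ρ^6*Δ^3*e^4 + 3*c^4*d^5*ρ^8*Δ^4*e^4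 + -2*c^4*d^5*r^2*ρ^4*Δ^4*e^6 + 2*c^4*d^6*ρ^8*Δ^3*e^5 + -4*c^4*d^6*r^2*ρ^6*Δ^3*e^5 + 1*κ*d^5*r^4*ρ^8*Δ^3 + -4*κ*c*d^5*r^3*ρ^8*Δ^3*e + 6*κ*c^2*d^5*r^2*ρ^8*Δ^3*e^2 + -4*κ*c^3*d^5*r*ρ^8*Δ^3*e^3 + 1*κ*c^4*d^5*ρ^8*Δ^3*e^4 + -2*q.2^2*d^5*r^6*ρ^4*Δ^4 + 8*q.2^2*c*d^5*r^5*ρ^4*Δ^4*e + -12*q.2^2*c^2*d^5*r^4*ρ^4*Δ^4*e^2 + 8*q.2^2*c^3*d^5*r^3*ρ^4*Δ^4*e^3 + -2*q.2^2*c^4*d^5*r^2*ρ^4*Δ^4*e^4 + 4*q.1*d^5*r^6*ρ^4*Δ^4*e + 4*q.1*d^6*r^6*ρ^6*Δ^3 + -16*q.1*c*d^5*r^5*ρ^4*Δ^4*e^2 + -16*q.1*c*d^6*r^5*ρ^6*Δ^3*e + 24*q.1*c^2*d^5*r^4*ρ^4*Δ^4*e^3 + 24*q.1*c^2*d^6*r^4*ρ^6*Δ^3*e^2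 + -16*q.1*c^3*d^5*r^3*ρ^4*Δ^4*e^4 + -16*q.1*c^3*d^6*r^3*ρ^6*Δ^3*e^3 + 4*q.1*c^4*d^5*r^2*ρ^4*Δ^4*e^5 + 4*q.1*c^4*d^6*r^2*ρ^6*Δ^3*e^4 + -2*q.1^2*d^5*r^6*ρ^4*Δ^4 + 8*q.1^2*c*d^5*r^5*ρ^4*Δ^4*e + -12*q.1^2*c^2*d^5*r^4*ρ^4*Δ^4*e^2 + 8*q.1^2*c^3*d^5*r^3*ρ^4*Δ^4*e^3 + -2*q.1^2*c^4*d^5*r^2*ρ^4*Δ^4*e^4) * hde +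
  (-4*d^5*r^5*ρ^4*Δ^5*e + -4*d^6*r^5*ρ^4*Δ^4*e^2 + -8*d^6*r^5*ρ^6*Δ^4 + -8*d^7*r^5*ρ^6*Δ^3*e + 12*c*d^5*r^4*ρ^4*Δ^5*e^2 + 4*c*d^5*r^4*ρ^6*Δ^5 + 12*c*d^6*r^4*ρ^4*Δ^4*e^3 + 28*c*d^6*r^4*ρ^6*Δ^4*e + 24*c*d^7*r^4*ρ^6*Δ^3*e^2 + -12*c^2*d^5*r^3*ρ^4*Δ^5*e^3 + -8*c^2*d^5*r^3*ρ^6*Δ^5*e + -12*c^2*d^6*r^3*ρ^4*Δ^4*e^4 + -32*c^2*d^6*r^3*ρ^6*Δ^4*e^2 + -24*c^2*d^7*r^3*ρ^6*Δ^3*e^3 + 4*c^3*d^5*r^2*ρ^4*Δ^5*e^4 + 4*c^3*d^5*r^2*ρ^6*Δ^5*e^2 + 4*c^3*d^6*r^2*ρ^4*Δ^4*e^5 + 12*c^3*d^6*r^2*ρ^6*Δ^4*e^3 + 8*c^3*d^7*r^2*ρ^6*Δ^3*e^4 + 4*q.1*d^5*r^5*ρ^4*Δ^5 + 4*q.1*d^6*r^5*ρ^4*Δ^4*e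 + -12*q.1*c*d^5*r^4*ρ^4*Δ^5*e + -12*q.1*c*d^6*r^4*ρ^4*Δ^4*e^2 + 12*q.1*c^2*d^5*r^3*ρ^4*Δ^5*e^2 + 12*q.1*c^2*d^6*r^3*ρ^4*Δ^4*e^3 + -4*q.1*c^3*d^5*r^2*ρ^4*Δ^5*e^3 + -4*q.1*c^3*d^6*r^2*ρ^4*Δ^4*e^4) * hu +
  (4*s*d^5*r^4*ρ^6*Δ^5 + 4*s*d^6*r^4*ρ^6*Δ^4*e + 4*s*d^7*r^6*ρ^6*Δ^3 + -8*c*s*d^5*r^3*ρ^6*Δ^5*e + -8*c*s*d^6*r^3*ρ^6*Δ^4*e^2 + -8*c*s*d^7*r^5*ρ^6*Δ^3*e + 4*c^2*s*d^5*r^2*ρ^6*Δ^5*e^2 + 4*c^2*s*d^6*r^2*ρ^6*Δ^4*e^3 + 4*c^2*s*d^7*r^4*ρ^6*Δ^3*e^2 + 4*q.2*d^5*r^5*ρ^4*Δ^5 + 4*q.2*d^6*r^5*ρ^4*Δ^4*e + 4*q.2*d^7*r^7*ρ^4*Δ^3 + -12*q.2*c*d^5*r^4*ρ^4*Δ^5*e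 + -12*q.2*c*d^6*r^4*ρ^4*Δ^4*e^2 + -12*q.2*c*d^7*r^6*ρ^4*Δ^3*e + 12*q.2*c^2*d^5*r^3*ρ^4*Δ^5*e^2 + 12*q.2*c^2*d^6*r^3*ρ^4*Δ^4*e^3 + 12*q.2*c^2*d^7*r^5*ρ^4*Δ^3*e^2 + -4*q.2*c^3*d^5*r^2*ρ^4*Δ^5*e^3 + -4*q.2*c^3*d^6*r^2*ρ^4*Δ^4*e^4 + -4*q.2*c^3*d^7*r^4*ρ^4*Δ^3*e^3) * hv +
  (4*d^5*r^4*ρ^8*Δ^5 + 4*d^6*r^4*ρ^8*Δ^4*e + 4*d^7*r^6*ρ^8*Δ^3 + -8*c*d^5*r^3*ρ^8*Δ^5*e + -8*c*d^6*r^3*ρ^8*Δ^4*e^2 + -8*c*d^7*r^5*ρ^8*Δ^3*e + 4*c^2*d^5*r^2*ρ^8*Δ^5*e^2 + 4*c^2*d^6*r^2*ρ^8*Δ^4*e^3 + 4*c^2*d^7*r^4*ρ^8*Δ^3*e^2) * hcs +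
  (-4*d^6*r^4*ρ^8*Δ^3 + 8*c*d^5*r^3*ρ^8*Δ^4 + 16*c*d^6*r^3*ρ^8*Δ^3*e + -20*c^2*d^5*r^2*ρ^8*Δ^4*e + -24*c^2*d^6*r^2*ρ^8*Δ^3*e^2 + 4*c^2*d^6*r^4*ρ^8*Δ^3 + 16*c^3*d^5*r*ρ^8*Δ^4*e^2 + 16*c^3*d^6*r*ρ^8*Δ^3*e^3 + -8*c^3*d^6*r^3*ρ^8*Δ^3*e + -4*c^4*d^5*ρ^8*Δ^4*e^3 + -4*c^4*d^6*ρ^8*Δ^3*e^4 + 4*c^4*d^6*r^2*ρ^8*Δ^3*e^2) * he4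
      have hMpos : 0 < 4 * d ^ 5 * r ^ 4 * Δ ^ 3 * (r - e * c) ^ 4 := by
        have := pow_pos hd 5
        have := pow_pos hr 4
        have := pow_pos hΔpos 3
        have := pow_pos hDpos 4
        positivity
      rcases mul_eq_zero.mp hbig with hz | hz
      · exact absurd hz hMpos.ne'
      · linarith
    rw [div_add_div _ _ ha2pos.ne' hb2pos.ne', div_eq_one_iff_eq (mul_pos ha2pos hb2pos).ne']
    have h9 : ((q.1 - (ρ ^ 2 * d / Δ + e)) ^ 2 * b2 + a2 * q.2 ^ 2 - a2 * b2) * Δ ^ 2 = 0 := by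
      linear_combination hT + b2 * ((q.1 - (ρ ^ 2 * d / Δ + e)) * Δ + (q.1 * Δ - ρ ^ 2 * d - e * Δ)) * hXA
    rcases mul_eq_zero.mp h9 with hz | hz
    · linarith
    · exact absurd hz (pow_ne_zero 2 hΔpos.ne')
  · rw [ha2, hb2]
    field_simp
    ring
end

section
/- Kerawala's condition: a pair of nested circles with radii R (outer) and r (inner) and center distance d admits a Poncelet 4-periodic family (quadrilaterals inscribed in the outer and tangent to the inner circle) only if 1/(R−d)² + 1/(R+d)² = 1/r². In particular, for the specific quadrilateral with two vertices at the intersections of the line of centers with the outer circle, tangency of all four sides to the inner circle implies this relation. -/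
/-- The squared-distance tangency condition: the line through `A` and `B` is at
distance `r` from the point `Q` (cross-product form, squared). -/
def TangentLine (A B Q : ℝ × ℝ) (r : ℝ) : Prop :=
  ((B.1 - A.1) * (Q.2 - A.2) - (B.2 - A.2) * (Q.1 - A.1)) ^ 2 =
    r ^ 2 * ((B.1 - A.1) ^ 2 + (B.2 - A.2) ^ 2)

/-- Kerawala's condition.  Outer circle of radius `R` centered at the
origin, inner circle of radius `r` centered at `(d, 0)`, `0 < r`, `0 ≤ d`,
`d + r < R`.  If the quadrilateral with vertices `(R, 0)`, `(x, y)`, `(−R, 0)`,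
`(x, −y)`, with `(x, y)` on the outer circle and `y ≠ 0`, has all four sides tangent
to the inner circle, then `1/(R−d)² + 1/(R+d)² = 1/r²`. -/
theorem kerawala_condition
    (R r d x y : ℝ) (hr : 0 < r) (hd : 0 ≤ d) (hnest : d + r < R)
    (hxy : x ^ 2 + y ^ 2 = R ^ 2) (hy : y ≠ 0)
    (h₁ : TangentLine (R, 0) (x, y) (d, 0) r)
    (h₂ : TangentLine (x, y) (-R, 0) (d, 0) r)
    (h₃ : TangentLine (-R, 0) (x, -y) (d, 0) r)
    (h₄ : TangentLine (x, -y) (R, 0) (d, 0) r) :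
    1 / (R - d) ^ 2 + 1 / (R + d) ^ 2 = 1 / r ^ 2 := by
  unfold TangentLine at h₁ h₂
  simp only [] at h₁ h₂
  have hRd : R - d > 0 := by linarith
  have hRd' : R + d > 0 := by linarith
  have hy2 : y ^ 2 > 0 := by positivity
  have hy2' : (y ^ 2 : ℝ) ≠ 0 := ne_of_gt hy2
  have e1 : y ^ 2 * (R - d) ^ 2 = r ^ 2 * (2 * R * (R - x)) := by nlinarith [h₁]
  have e2 : y ^ 2 * (R + d) ^ 2 = r ^ 2 * (2 * R * (R + x)) := by nlinarith [h₂]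
  have p1 : (y ^ 2 * (R - d) ^ 2) * (y ^ 2 * (R + d) ^ 2) =
      (r ^ 2 * (2 * R * (R - x))) * (r ^ 2 * (2 * R * (R + x))) := by rw [e1, e2]
  have p2 : y ^ 2 * (y ^ 2 * ((R - d) ^ 2 * (R + d) ^ 2)) = y ^ 2 * (4 * R ^ 2 * r ^ 4) := by
    linear_combination p1 - 4 * R ^ 2 * r ^ 4 * hxy
  have p3 : y ^ 2 * ((R - d) ^ 2 * (R + d) ^ 2) = 4 * R ^ 2 * r ^ 4 :=
    mul_left_cancel₀ hy2' p2
  have s1 : y ^ 2 * ((R - d) ^ 2 + (R + d) ^ 2) = 4 * R ^ 2 * r ^ 2 := by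
    linear_combination e1 + e2
  have key : ((R - d) ^ 2 + (R + d) ^ 2) * r ^ 2 = (R - d) ^ 2 * (R + d) ^ 2 := by
    have h : y ^ 2 * (((R - d) ^ 2 + (R + d) ^ 2) * r ^ 2) =
        y ^ 2 * ((R - d) ^ 2 * (R + d) ^ 2) := by linear_combination r ^ 2 * s1 - p3
    exact mul_left_cancel₀ hy2' h
  have hr2 : (r : ℝ) ^ 2 ≠ 0 := by positivity
  have h1 : ((R - d) ^ 2 : ℝ) ≠ 0 := by positivity
  have h2 : ((R + d) ^ 2 : ℝ) ≠ 0 := by positivity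
  field_simp
  linear_combination key
end
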